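/- Let (|a_i⟩)_{i=1}^N and (|b_j⟩)_{j=1}^N be two orthonormal bases of ℂ^N with transition matrix U_{ij} = ⟨a_i|b_j⟩, and let Q = (R_1, R_2−R_1, R_3−R_2, …, R_N−R_{N−1}). Then for any unit vector |ψ⟩ ∈ ℂ^N, the probability vectors p^ψ and q^ψ satisfy the majorization relation p^ψ ⊗ q^ψ ≺ Q, where p^ψ ⊗ q^ψ is the N²-dimensional vector with entries p_i^ψ · q_j^ψ (and Q is padded with zeros to length N²). -/

import Mathlib

/-- The measurable space structure on matrices (the product σ-algebra, which coincides with the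
Borel σ-algebra). -/
instance {m n α : Type*} [MeasurableSpace α] : MeasurableSpace (Matrix m n α) :=
  inferInstanceAs (MeasurableSpace (m → n → α))

/-- The operator norm (largest singular value) of a rectangular complex matrix, i.e. the norm of
the induced linear map between Euclidean spaces. -/
noncomputable def opNorm {m n : Type*} [Fintype m] [Fintype n] [DecidableEq n]
    (M : Matrix m n ℂ) : ℝ :=
  ‖LinearMap.toContinuousLinearMap (Matrix.toEuclideanLin M)‖

/-- `‖Û^(n,m)‖`: the maximal operator norm of an `n × m` submatrix of the `N × N` matrix `U`,
the maximum being taken over all choices of `n` rows and `m` columns. -/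
noncomputable def maxSubNorm (N n m : ℕ) (U : Matrix (Fin N) (Fin N) ℂ) : ℝ :=
  ⨆ f : Fin n ↪ Fin N, ⨆ g : Fin m ↪ Fin N, opNorm (U.submatrix f g)

/-- `s_k = max{‖Û^(1,k)‖, ‖Û^(2,k−1)‖, …, ‖Û^(k,1)‖}`, the maximal operator norm of a
submatrix of `U` with `n + m = k + 1` rows and columns (`n, m ≥ 1`).  By convention `s_0 = 0`
(the supremum over the empty range). -/
noncomputable def sk (N : ℕ) (U : Matrix (Fin N) (Fin N) ℂ) (k : ℕ) : ℝ :=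
  ⨆ a : Fin k, maxSubNorm N (a.1 + 1) (k - a.1) U

/-- For a vector `x` with nonnegative entries, `topSum x k` is the sum of the `k` largest
coordinates of `x` (the maximum of `∑_{i ∈ s} x i` over subsets `s` with `|s| ≤ k`; for
`k ≥ card ι` it equals the total sum, which corresponds to padding `x` with zeros). -/
noncomputable def topSum {ι : Type*} [Fintype ι] (x : ι → ℝ) (k : ℕ) : ℝ :=
  ⨆ s : {s : Finset ι // s.card ≤ k}, ∑ i ∈ s.1, x i

/-- Majorization `x ≺ y` for vectors with nonnegative coordinates (the index types may
differ; this amounts to padding the shorter vector with zeros): for every `k`, the sum of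
the `k` largest coordinates of `x` is at most the sum of the `k` largest coordinates of `y`,
and the total sums of coordinates agree. -/
def Majorizes {ι κ : Type*} [Fintype ι] [Fintype κ] (x : ι → ℝ) (y : κ → ℝ) : Prop :=
  (∀ k : ℕ, topSum x k ≤ topSum y k) ∧ ∑ i, x i = ∑ j, y j

/-- `R_k = ((1 + s_k)/2)²` for `1 ≤ k ≤ N`, with the convention `R_0 = 0`. -/
noncomputable def Rcoef (N : ℕ) (U : Matrix (Fin N) (Fin N) ℂ) (k : ℕ) : ℝ :=
  if k = 0 then 0 else ((1 + sk N U k) / 2) ^ 2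

/-- The vector `Q = (R_1, R_2 − R_1, …, R_N − R_{N−1})`, indexed by `i : Fin N`. -/
noncomputable def Qvec (N : ℕ) (U : Matrix (Fin N) (Fin N) ℂ) (i : Fin N) : ℝ :=
  Rcoef N U (i.1 + 1) - Rcoef N U i.1

/-!
For `I, J ⊆ {1, …, N}` put `α = ∑_{i ∈ I} p_i`, `β = ∑_{j ∈ J} q_j` and let `x`, `y` be the
projections of `ψ` onto `span {a_i}_{i ∈ I}` and `span {b_j}_{j ∈ J}`. Then
`α + β = re ⟪x + y, ψ⟫ ≤ ‖x + y‖` and `‖x + y‖² = α + β + 2 re ⟪x, y⟫ ≤ (1 + ‖U(I,J)‖) (α + β)`,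
so `α + β ≤ 1 + ‖U(I,J)‖` and `α β ≤ ((1 + ‖U(I,J)‖) / 2)²`.

After sorting `p` and `q` decreasingly, any `k` entries of `p ⊗ q` can be pushed into a staircase
of `k` cells without decreasing their sum. A staircase contains its first row and column, so it
meets at most `k + 1` rows and columns in total; hence the `k` entries sum to at most
`α β ≤ R_k` for some `I`, `J` with `|I| + |J| = k + 1`, and `R_k` is the sum of the first `k`
entries of `Q`. Finally `s_N = 1` (submatrices of the unitary `U` are contractions, and a column
of `U` is a unit vector), so both vectors sum to `1`.
-/

open scoped InnerProductSpace

theorem Orthonormal.norm_sum_smul {𝕜 E ι : Type*} [RCLike 𝕜] [NormedAddCommGroup E]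
    [InnerProductSpace 𝕜 E] [Fintype ι] {v : ι → E} (hv : Orthonormal 𝕜 v)
    (c : EuclideanSpace 𝕜 ι) : ‖∑ i, c i • v i‖ = ‖c‖ := by
  refine (sq_eq_sq₀ (norm_nonneg _) (norm_nonneg _)).mp ?_
  rw [EuclideanSpace.norm_sq_eq, @norm_sq_eq_re_inner 𝕜, hv.inner_sum, map_sum]
  simp [RCLike.conj_mul]

theorem re_inner_sum_inner_smul_self {𝕜 E ι : Type*} [RCLike 𝕜] [NormedAddCommGroup E]
    [InnerProductSpace 𝕜 E] [Fintype ι] (v : ι → E) (x : E) :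
    RCLike.re ⟪∑ i, ⟪v i, x⟫_𝕜 • v i, x⟫_𝕜 = ∑ i, ‖⟪v i, x⟫_𝕜‖ ^ 2 := by
  simp_rw [sum_inner, inner_smul_left, RCLike.conj_mul, map_sum, ← RCLike.ofReal_pow,
    RCLike.ofReal_re]

theorem norm_sq_mul_norm_sq_le_of_re_inner {𝕜 E : Type*} [RCLike 𝕜] [NormedAddCommGroup E]
    [InnerProductSpace 𝕜 E] {x y ψ : E} {s : ℝ} (hs : 0 ≤ s) (hψ : ‖ψ‖ ≤ 1)
    (hx : RCLike.re ⟪x, ψ⟫_𝕜 = ‖x‖ ^ 2) (hy : RCLike.re ⟪y, ψ⟫_𝕜 = ‖y‖ ^ 2)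
    (hxy : RCLike.re ⟪x, y⟫_𝕜 ≤ s * (‖x‖ * ‖y‖)) :
    ‖x‖ ^ 2 * ‖y‖ ^ 2 ≤ ((1 + s) / 2) ^ 2 := by
  have h_sum_le : ‖x‖ ^ 2 + ‖y‖ ^ 2 ≤ ‖x + y‖ := by
    calc ‖x‖ ^ 2 + ‖y‖ ^ 2 = RCLike.re ⟪x + y, ψ⟫_𝕜 := by rw [inner_add_left, map_add, hx, hy]
      _ ≤ ‖x + y‖ * ‖ψ‖ := re_inner_le_norm _ _
      _ ≤ ‖x + y‖ := mul_le_of_le_one_right (norm_nonneg _) hψ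
  have h_norm_add := norm_add_sq (𝕜 := 𝕜) x y
  have h_amgm := two_mul_le_add_sq ‖x‖ ‖y‖
  have h_sum_le' : ‖x‖ ^ 2 + ‖y‖ ^ 2 ≤ 1 + s := by
    nlinarith [pow_le_pow_left₀ (by positivity) h_sum_le 2]
  nlinarith [sq_nonneg (‖x‖ ^ 2 - ‖y‖ ^ 2), sq_nonneg (‖x‖ ^ 2 + ‖y‖ ^ 2)]

theorem norm_toEuclideanLin_le_opNorm_mul {m n : Type*} [Fintype m] [Fintype n] [DecidableEq n]
    (M : Matrix m n ℂ) (x : EuclideanSpace ℂ n) :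
    ‖Matrix.toEuclideanLin M x‖ ≤ opNorm M * ‖x‖ :=
  (LinearMap.toContinuousLinearMap (Matrix.toEuclideanLin M)).le_opNorm x

theorem opNorm_nonneg {m n : Type*} [Fintype m] [Fintype n] [DecidableEq n]
    (M : Matrix m n ℂ) : 0 ≤ opNorm M :=
  norm_nonneg _

section CrossGram

variable {E ι κ : Type*} [NormedAddCommGroup E] [InnerProductSpace ℂ E] [Fintype κ] [DecidableEq κ]

noncomputable def crossGram (e : ι → E) (e' : κ → E) : Matrix ι κ ℂ :=
  Matrix.of fun i j => ⟪e i, e' j⟫_ℂ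

theorem toEuclideanLin_crossGram_apply (e : ι → E) (e' : κ → E) (d : EuclideanSpace ℂ κ)
    (i : ι) : Matrix.toEuclideanLin (crossGram e e') d i = ⟪e i, ∑ j, d j • e' j⟫_ℂ := by
  simp [crossGram, Matrix.mulVec, dotProduct, mul_comm]

variable [Fintype ι]

theorem norm_toEuclideanLin_crossGram_sq (e : ι → E) (e' : κ → E) (d : EuclideanSpace ℂ κ) :
    ‖Matrix.toEuclideanLin (crossGram e e') d‖ ^ 2 = ∑ i, ‖⟪e i, ∑ j, d j • e' j⟫_ℂ‖ ^ 2 := by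
  simp only [EuclideanSpace.norm_sq_eq, toEuclideanLin_crossGram_apply]

theorem opNorm_crossGram_le_one {e : ι → E} {e' : κ → E} (he : Orthonormal ℂ e)
    (he' : Orthonormal ℂ e') : opNorm (crossGram e e') ≤ 1 := by
  refine ContinuousLinearMap.opNorm_le_bound _ zero_le_one fun d => ?_
  rw [one_mul, LinearMap.coe_toContinuousLinearMap', ← he'.norm_sum_smul d]
  refine (pow_le_pow_iff_left₀ (norm_nonneg _) (norm_nonneg _) two_ne_zero).mp ?_
  rw [norm_toEuclideanLin_crossGram_sq]
  exact he.sum_inner_products_le _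

theorem norm_toEuclideanLin_crossGram (b : OrthonormalBasis ι ℂ E) {e' : κ → E}
    (he' : Orthonormal ℂ e') (d : EuclideanSpace ℂ κ) :
    ‖Matrix.toEuclideanLin (crossGram b e') d‖ = ‖d‖ := by
  rw [← he'.norm_sum_smul d]
  refine (sq_eq_sq₀ (norm_nonneg _) (norm_nonneg _)).mp ?_
  rw [norm_toEuclideanLin_crossGram_sq, b.sum_sq_norm_inner_right]

theorem one_le_opNorm_crossGram [Nonempty κ] (b : OrthonormalBasis ι ℂ E) {e' : κ → E}
    (he' : Orthonormal ℂ e') : 1 ≤ opNorm (crossGram b e') := by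
  obtain ⟨j⟩ := ‹Nonempty κ›
  simpa [norm_toEuclideanLin_crossGram b he'] using
    norm_toEuclideanLin_le_opNorm_mul (crossGram b e') (EuclideanSpace.single j 1)

theorem sum_norm_inner_sq_mul_le {e : ι → E} {e' : κ → E} (he : Orthonormal ℂ e)
    (he' : Orthonormal ℂ e') {ψ : E} (hψ : ‖ψ‖ ≤ 1) :
    (∑ i, ‖⟪e i, ψ⟫_ℂ‖ ^ 2) * ∑ j, ‖⟪e' j, ψ⟫_ℂ‖ ^ 2 ≤
      ((1 + opNorm (crossGram e e')) / 2) ^ 2 := by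
  set c : EuclideanSpace ℂ ι := WithLp.toLp 2 fun i => ⟪e i, ψ⟫_ℂ
  set d : EuclideanSpace ℂ κ := WithLp.toLp 2 fun j => ⟪e' j, ψ⟫_ℂ
  set x := ∑ i, c i • e i
  set y := ∑ j, d j • e' j
  have hx : RCLike.re ⟪x, ψ⟫_ℂ = ‖x‖ ^ 2 := by
    rw [he.norm_sum_smul, EuclideanSpace.norm_sq_eq]
    exact re_inner_sum_inner_smul_self e ψ
  have hy : RCLike.re ⟪y, ψ⟫_ℂ = ‖y‖ ^ 2 := by
    rw [he'.norm_sum_smul, EuclideanSpace.norm_sq_eq]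
    exact re_inner_sum_inner_smul_self e' ψ
  have hxy : ⟪x, y⟫_ℂ = ⟪c, Matrix.toEuclideanLin (crossGram e e') d⟫_ℂ := by
    simp only [x, y, PiLp.inner_apply, toEuclideanLin_crossGram_apply, sum_inner, inner_smul_left,
      RCLike.inner_apply, mul_comm]
  have hxy_le : RCLike.re ⟪x, y⟫_ℂ ≤ opNorm (crossGram e e') * (‖x‖ * ‖y‖) := by
    rw [he.norm_sum_smul, he'.norm_sum_smul, hxy]
    calc RCLike.re ⟪c, Matrix.toEuclideanLin (crossGram e e') d⟫_ℂ
        ≤ ‖c‖ * ‖Matrix.toEuclideanLin (crossGram e e') d‖ := re_inner_le_norm _ _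
      _ ≤ ‖c‖ * (opNorm (crossGram e e') * ‖d‖) :=
          mul_le_mul_of_nonneg_left (norm_toEuclideanLin_le_opNorm_mul _ _) (norm_nonneg _)
      _ = opNorm (crossGram e e') * (‖c‖ * ‖d‖) := by ring
  have := norm_sq_mul_norm_sq_le_of_re_inner (opNorm_nonneg _) hψ hx hy hxy_le
  rwa [he.norm_sum_smul, he'.norm_sum_smul, EuclideanSpace.norm_sq_eq,
    EuclideanSpace.norm_sq_eq] at this

end CrossGram

section SubmatrixNorm

variable {N n m k : ℕ} (U : Matrix (Fin N) (Fin N) ℂ)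

theorem opNorm_submatrix_le_maxSubNorm (f : Fin n ↪ Fin N) (g : Fin m ↪ Fin N) :
    opNorm (U.submatrix f g) ≤ maxSubNorm N n m U :=
  le_ciSup_of_le (Set.finite_range _).bddAbove f <|
    le_ciSup (f := fun g : Fin m ↪ Fin N => opNorm (U.submatrix f g))
      (Set.finite_range _).bddAbove g

theorem maxSubNorm_le_sk (hn : 1 ≤ n) (hm : 1 ≤ m) (hnmk : n + m = k + 1) :
    maxSubNorm N n m U ≤ sk N U k := by
  obtain ⟨a, rfl⟩ := Nat.exists_eq_add_of_le' hn
  obtain rfl : m = k - a := by omega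
  exact le_ciSup (f := fun a : Fin k => maxSubNorm N (a.1 + 1) (k - a.1) U)
    (Set.finite_range _).bddAbove ⟨a, by omega⟩

theorem sk_le_of_opNorm_submatrix_le {C : ℝ} (hC : 0 ≤ C)
    (h : ∀ n m (f : Fin n ↪ Fin N) (g : Fin m ↪ Fin N), opNorm (U.submatrix f g) ≤ C) :
    sk N U k ≤ C :=
  Real.iSup_le (fun _ => Real.iSup_le (fun f => Real.iSup_le (fun g => h _ _ f g) hC) hC) hC

end SubmatrixNorm

theorem sk_crossGram_eq_one {E : Type*} [NormedAddCommGroup E] [InnerProductSpace ℂ E] {N : ℕ}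
    (hN : 0 < N) (a b : OrthonormalBasis (Fin N) ℂ E) : sk N (crossGram a b) N = 1 := by
  refine le_antisymm (sk_le_of_opNorm_submatrix_le _ zero_le_one fun n m f g => ?_) ?_
  · exact opNorm_crossGram_le_one (a.orthonormal.comp f f.injective)
      (b.orthonormal.comp g g.injective)
  · let column : Fin 1 ↪ Fin N := ⟨fun _ => ⟨0, hN⟩, fun _ _ _ => Subsingleton.elim _ _⟩
    calc 1 ≤ opNorm ((crossGram a b).submatrix (Function.Embedding.refl _) column) :=
          one_le_opNorm_crossGram a (b.orthonormal.comp column column.injective)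
      _ ≤ maxSubNorm N N 1 (crossGram a b) := opNorm_submatrix_le_maxSubNorm _ _ _
      _ ≤ sk N (crossGram a b) N := maxSubNorm_le_sk _ hN le_rfl rfl

theorem Finset.sum_insert_erase_add {ι M : Type*} [DecidableEq ι] [AddCommMonoid M]
    {s : Finset ι} {x y : ι} (hx : x ∈ s) (hy : y ∉ s) (f : ι → M) :
    ∑ z ∈ insert y (s.erase x), f z + f x = ∑ z ∈ s, f z + f y := by
  rw [Finset.sum_insert (fun h => hy (Finset.mem_of_mem_erase h)), add_assoc,
    Finset.sum_erase_add _ _ hx, add_comm]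

theorem Finset.card_image_fst_add_card_image_snd_le {α β : Type*} [Preorder α] [OrderBot α]
    [Preorder β] [OrderBot β] [DecidableEq α] [DecidableEq β] {T : Finset (α × β)}
    (hT : IsLowerSet (T : Set (α × β))) :
    (T.image Prod.fst).card + (T.image Prod.snd).card ≤ T.card + 1 := by
  set column := (T.image Prod.snd).image (Prod.mk (⊥ : α))
  set row := (T.image Prod.fst).image (fun i => (i, (⊥ : β)))
  have h_column : column ⊆ T := by
    simp only [column, Finset.subset_iff, Finset.mem_image]
    rintro _ ⟨_, ⟨x, hx, rfl⟩, rfl⟩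
    exact hT (show (⊥, x.2) ≤ x from ⟨bot_le, le_rfl⟩) hx
  have h_row : row ⊆ T := by
    simp only [row, Finset.subset_iff, Finset.mem_image]
    rintro _ ⟨_, ⟨x, hx, rfl⟩, rfl⟩
    exact hT (show (x.1, ⊥) ≤ x from ⟨le_rfl, bot_le⟩) hx
  have h_inter : column ∩ row ⊆ {(⊥, ⊥)} := by
    simp only [column, row, Finset.subset_iff, Finset.mem_inter, Finset.mem_image]
    rintro _ ⟨⟨j, -, rfl⟩, ⟨i, -, h⟩⟩
    simp_all
  have := Finset.card_union_add_card_inter column row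
  have := Finset.card_le_card (Finset.union_subset h_column h_row)
  have := (Finset.card_le_card h_inter).trans_eq (Finset.card_singleton _)
  rw [Finset.card_image_of_injective _ (Prod.mk_right_injective (⊥ : α)),
    Finset.card_image_of_injective _ (Prod.mk_left_injective (⊥ : β))] at *
  omega

theorem Finset.sum_mul_le_sum_image_fst_mul_sum_image_snd {α β : Type*} [DecidableEq α]
    [DecidableEq β] {p : α → ℝ} {q : β → ℝ} (hp : 0 ≤ p) (hq : 0 ≤ q) (T : Finset (α × β)) :
    ∑ x ∈ T, p x.1 * q x.2 ≤ (∑ i ∈ T.image Prod.fst, p i) * ∑ j ∈ T.image Prod.snd, q j := by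
  rw [Finset.sum_mul_sum, ← Finset.sum_product']
  exact Finset.sum_le_sum_of_subset_of_nonneg Finset.subset_product
    fun x _ _ => mul_nonneg (hp x.1) (hq x.2)

theorem Finset.sum_orderEmbOfFin {α M : Type*} [LinearOrder α] [AddCommMonoid M] (s : Finset α)
    (f : α → M) : ∑ t, f (s.orderEmbOfFin rfl t) = ∑ i ∈ s, f i := by
  conv_rhs => rw [← s.map_orderEmbOfFin_univ rfl]
  rw [Finset.sum_map]
  rfl

section Rearrangement

variable {n m : ℕ} {p : Fin n → ℝ} {q : Fin m → ℝ}

/- Moving a point of `T` to a free position below it does not decrease the sum and strictly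
decreases the potential `∑ (i + j)`. -/
theorem exists_isLowerSet_sum_mul_le (hp : 0 ≤ p) (hq : 0 ≤ q) (hpa : Antitone p)
    (hqa : Antitone q) (T : Finset (Fin n × Fin m)) :
    ∃ T₀ : Finset (Fin n × Fin m), T₀.card = T.card ∧ IsLowerSet (T₀ : Set (Fin n × Fin m)) ∧
      ∑ x ∈ T, p x.1 * q x.2 ≤ ∑ x ∈ T₀, p x.1 * q x.2 := by
  induction h : ∑ x ∈ T, (x.1.val + x.2.val) using Nat.strong_induction_on generalizing T with
  | _ r ih =>
  by_cases hT : IsLowerSet (T : Set (Fin n × Fin m))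
  · exact ⟨T, rfl, hT, le_rfl⟩
  obtain ⟨x, y, hyx, hx, hy⟩ : ∃ x y, y ≤ x ∧ x ∈ T ∧ y ∉ T := by
    simpa only [IsLowerSet, Finset.mem_coe, not_forall, exists_prop] using hT
  set T₁ := insert y (T.erase x)
  have h_card : T₁.card = T.card := by
    rw [Finset.card_insert_of_notMem (fun h => hy (Finset.mem_of_mem_erase h)),
      Finset.card_erase_add_one hx]
  have h_sum : ∑ z ∈ T, p z.1 * q z.2 ≤ ∑ z ∈ T₁, p z.1 * q z.2 := by
    have : ∑ z ∈ T₁, p z.1 * q z.2 + p x.1 * q x.2 = ∑ z ∈ T, p z.1 * q z.2 + p y.1 * q y.2 :=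
      Finset.sum_insert_erase_add hx hy _
    have : p x.1 * q x.2 ≤ p y.1 * q y.2 :=
      mul_le_mul (hpa hyx.1) (hqa hyx.2) (hq _) (hp _)
    linarith
  have h_potential : ∑ z ∈ T₁, (z.1.val + z.2.val) < r := by
    have : ∑ z ∈ T₁, (z.1.val + z.2.val) + (x.1.val + x.2.val) =
        ∑ z ∈ T, (z.1.val + z.2.val) + (y.1.val + y.2.val) :=
      Finset.sum_insert_erase_add hx hy _
    have : y.1.val + y.2.val < x.1.val + x.2.val := by
      obtain ⟨h₁, h₂⟩ | ⟨h₁, h₂⟩ := Prod.lt_iff.mp (hyx.lt_of_ne fun h => hy (h ▸ hx))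
      · exact Nat.add_lt_add_of_lt_of_le h₁ h₂
      · exact Nat.add_lt_add_of_le_of_lt h₁ h₂
    omega
  obtain ⟨T₀, h_card₀, h_lower, h_sum₀⟩ := ih _ h_potential T₁ rfl
  exact ⟨T₀, h_card₀.trans h_card, h_lower, h_sum.trans h_sum₀⟩

theorem exists_card_add_card_eq_sum_mul_le_of_antitone (hp : 0 ≤ p) (hq : 0 ≤ q)
    (hpa : Antitone p) (hqa : Antitone q) {T : Finset (Fin n × Fin m)} (hT : T.Nonempty)
    {k : ℕ} (hTk : T.card ≤ k) (hkn : k ≤ n) :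
    ∃ I : Finset (Fin n), ∃ J : Finset (Fin m), I.Nonempty ∧ J.Nonempty ∧
      I.card + J.card = k + 1 ∧ ∑ x ∈ T, p x.1 * q x.2 ≤ (∑ i ∈ I, p i) * ∑ j ∈ J, q j := by
  obtain ⟨T₀, h_card, h_lower, h_sum⟩ := exists_isLowerSet_sum_mul_le hp hq hpa hqa T
  have hT₀ : T₀.Nonempty := Finset.card_pos.mp (h_card ▸ hT.card_pos)
  have : NeZero n := ⟨fun hn => (hn ▸ hT.choose.1).elim0⟩
  have : NeZero m := ⟨fun hm => (hm ▸ hT.choose.2).elim0⟩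
  have h_hook := Finset.card_image_fst_add_card_image_snd_le h_lower
  set J := T₀.image Prod.snd
  have hJ : 0 < J.card := (hT₀.image _).card_pos
  obtain ⟨I, h_sub, h_card_I⟩ := Finset.exists_superset_card_eq (s := T₀.image Prod.fst)
    (n := k + 1 - J.card) (by omega) (by simp only [Fintype.card_fin]; omega)
  refine ⟨I, J, (hT₀.image _).mono h_sub, hT₀.image _, by omega, ?_⟩
  calc ∑ x ∈ T, p x.1 * q x.2 ≤ ∑ x ∈ T₀, p x.1 * q x.2 := h_sum
    _ ≤ (∑ i ∈ T₀.image Prod.fst, p i) * ∑ j ∈ J, q j :=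
        Finset.sum_mul_le_sum_image_fst_mul_sum_image_snd hp hq T₀
    _ ≤ (∑ i ∈ I, p i) * ∑ j ∈ J, q j :=
        mul_le_mul_of_nonneg_right (Finset.sum_le_sum_of_subset_of_nonneg h_sub fun i _ _ => hp i)
          (Finset.sum_nonneg fun j _ => hq j)

theorem exists_card_add_card_eq_sum_mul_le (hp : 0 ≤ p) (hq : 0 ≤ q)
    {T : Finset (Fin n × Fin m)} (hT : T.Nonempty) {k : ℕ} (hTk : T.card ≤ k) (hkn : k ≤ n) :
    ∃ I : Finset (Fin n), ∃ J : Finset (Fin m), I.Nonempty ∧ J.Nonempty ∧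
      I.card + J.card = k + 1 ∧ ∑ x ∈ T, p x.1 * q x.2 ≤ (∑ i ∈ I, p i) * ∑ j ∈ J, q j := by
  set σ := Tuple.sort (OrderDual.toDual ∘ p)
  set τ := Tuple.sort (OrderDual.toDual ∘ q)
  have hpa : Antitone (p ∘ σ) := monotone_toDual_comp_iff.mp (Tuple.monotone_sort _)
  have hqa : Antitone (q ∘ τ) := monotone_toDual_comp_iff.mp (Tuple.monotone_sort _)
  set e := (Equiv.prodCongr σ τ).symm.toEmbedding
  obtain ⟨I, J, hI, hJ, h_card, h_sum⟩ := exists_card_add_card_eq_sum_mul_le_of_antitone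
    (fun i => hp (σ i)) (fun j => hq (τ j)) hpa hqa (hT.map (f := e)) (by simpa using hTk) hkn
  refine ⟨I.map σ.toEmbedding, J.map τ.toEmbedding, hI.map, hJ.map, by simpa using h_card, ?_⟩
  simpa [e] using h_sum

end Rearrangement

section TopSum

variable {ι : Type*} [Fintype ι] {x : ι → ℝ} {k : ℕ}

instance : Nonempty {s : Finset ι // s.card ≤ k} := ⟨⟨∅, by simp⟩⟩

theorem topSum_le {C : ℝ} (h : ∀ s : Finset ι, s.card ≤ k → ∑ i ∈ s, x i ≤ C) :
    topSum x k ≤ C :=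
  ciSup_le fun s => h s.1 s.2

theorem le_topSum {s : Finset ι} (h : s.card ≤ k) : ∑ i ∈ s, x i ≤ topSum x k :=
  le_ciSup (f := fun s : {s : Finset ι // s.card ≤ k} => ∑ i ∈ s.1, x i)
    (Set.finite_range _).bddAbove ⟨s, h⟩

end TopSum

theorem majorizes_of_forall_topSum_le {ι κ : Type*} [Fintype ι] [Fintype κ] {x : ι → ℝ}
    {y : κ → ℝ} (hx : 0 ≤ x) (h_sum : ∑ i, x i = ∑ j, y j)
    (h : ∀ k, 0 < k → k < Fintype.card κ → topSum x k ≤ topSum y k) : Majorizes x y := by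
  refine ⟨fun k => ?_, h_sum⟩
  rcases Nat.eq_zero_or_pos k with rfl | hk
  · refine topSum_le fun s hs => ?_
    simpa [Finset.card_eq_zero.mp (Nat.le_zero.mp hs)] using le_topSum (x := y) (s := ∅) le_rfl
  rcases lt_or_ge k (Fintype.card κ) with hkκ | hkκ
  · exact h k hk hkκ
  calc topSum x k ≤ ∑ i, x i := topSum_le fun s _ =>
        Finset.sum_le_sum_of_subset_of_nonneg (Finset.subset_univ s) fun i _ _ => hx i
    _ = ∑ j, y j := h_sum
    _ ≤ topSum y k := le_topSum (by simpa using hkκ)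

section Qvec

variable {N : ℕ} (U : Matrix (Fin N) (Fin N) ℂ)

theorem sum_Qvec_castLE {k : ℕ} (hk : k ≤ N) :
    ∑ i : Fin k, Qvec N U (Fin.castLE hk i) = Rcoef N U k := by
  simp only [Qvec, Fin.val_castLE]
  rw [Fin.sum_univ_eq_sum_range (fun i => Rcoef N U (i + 1) - Rcoef N U i), Finset.sum_range_sub]
  simp [Rcoef]

theorem sum_Qvec : ∑ i, Qvec N U i = Rcoef N U N := by
  simpa using sum_Qvec_castLE U le_rfl

theorem Rcoef_le_topSum_Qvec {k : ℕ} (hk : k ≤ N) : Rcoef N U k ≤ topSum (Qvec N U) k := by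
  rw [← sum_Qvec_castLE U hk]
  simpa using le_topSum (x := Qvec N U) (s := Finset.univ.map (Fin.castLEEmb hk)) (by simp)

end Qvec

theorem sum_mul_le_sq_sk {E : Type*} [NormedAddCommGroup E] [InnerProductSpace ℂ E] {N : ℕ}
    {a b : Fin N → E} (ha : Orthonormal ℂ a) (hb : Orthonormal ℂ b) {ψ : E} (hψ : ‖ψ‖ ≤ 1)
    {k : ℕ} (hkN : k ≤ N) {T : Finset (Fin N × Fin N)} (hTk : T.card ≤ k) :
    ∑ x ∈ T, ‖⟪a x.1, ψ⟫_ℂ‖ ^ 2 * ‖⟪b x.2, ψ⟫_ℂ‖ ^ 2 ≤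
      ((1 + sk N (crossGram a b) k) / 2) ^ 2 := by
  rcases T.eq_empty_or_nonempty with rfl | hT
  · simp only [Finset.sum_empty]
    positivity
  obtain ⟨I, J, hI, hJ, h_card, h_sum⟩ := exists_card_add_card_eq_sum_mul_le
    (fun i => sq_nonneg ‖⟪a i, ψ⟫_ℂ‖) (fun j => sq_nonneg ‖⟪b j, ψ⟫_ℂ‖) hT hTk hkN
  set f := (I.orderEmbOfFin rfl).toEmbedding
  set g := (J.orderEmbOfFin rfl).toEmbedding
  calc _ ≤ (∑ i ∈ I, ‖⟪a i, ψ⟫_ℂ‖ ^ 2) * ∑ j ∈ J, ‖⟪b j, ψ⟫_ℂ‖ ^ 2 := h_sum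
    _ = (∑ t, ‖⟪(a ∘ f) t, ψ⟫_ℂ‖ ^ 2) * ∑ t, ‖⟪(b ∘ g) t, ψ⟫_ℂ‖ ^ 2 := by
        rw [← I.sum_orderEmbOfFin, ← J.sum_orderEmbOfFin]
        rfl
    _ ≤ ((1 + opNorm (crossGram (a ∘ f) (b ∘ g))) / 2) ^ 2 :=
        sum_norm_inner_sq_mul_le (ha.comp f f.injective) (hb.comp g g.injective) hψ
    _ ≤ ((1 + sk N (crossGram a b) k) / 2) ^ 2 := by
        have h_nonneg := opNorm_nonneg (crossGram (a ∘ f) (b ∘ g))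
        gcongr
        exact (opNorm_submatrix_le_maxSubNorm (crossGram a b) f g).trans
          (maxSubNorm_le_sk _ hI.card_pos hJ.card_pos h_card)

/-- Tensor-product majorization: if `(a_i)` and `(b_j)` are orthonormal bases of `ℂ^N` with
transition matrix `U_{ij} = ⟨a_i|b_j⟩`, then for any unit vector `ψ`, the `N²`-dimensional
vector `p^ψ ⊗ q^ψ` (with entries `p_i^ψ·q_j^ψ`, `p_i^ψ = |⟨a_i|ψ⟩|²`, `q_j^ψ = |⟨b_j|ψ⟩|²`)
is majorized by `Q = (R_1, R_2 − R_1, …, R_N − R_{N−1})` (padded with zeros). -/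
theorem tensor_product_majorization
    (N : ℕ) (a b : OrthonormalBasis (Fin N) ℂ (EuclideanSpace ℂ (Fin N)))
    (U : Matrix (Fin N) (Fin N) ℂ) (hU : ∀ i j, U i j = (inner ℂ (a i) (b j) : ℂ))
    (ψ : EuclideanSpace ℂ (Fin N)) (hψ : ‖ψ‖ = 1) :
    Majorizes
      (fun p : Fin N × Fin N =>
        ‖(inner ℂ (a p.1) ψ : ℂ)‖ ^ 2 * ‖(inner ℂ (b p.2) ψ : ℂ)‖ ^ 2)
      (Qvec N U) := by
  obtain rfl : U = crossGram a b := Matrix.ext hU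
  have hN : 0 < N := Nat.pos_of_ne_zero fun hN => by
    subst hN
    simp [Subsingleton.elim ψ 0] at hψ
  have h_sum : ∑ x : Fin N × Fin N, ‖⟪a x.1, ψ⟫_ℂ‖ ^ 2 * ‖⟪b x.2, ψ⟫_ℂ‖ ^ 2 = 1 := by
    rw [Fintype.sum_prod_type]
    dsimp only
    rw [← Finset.sum_mul_sum, a.sum_sq_norm_inner_right, b.sum_sq_norm_inner_right, hψ]
    norm_num
  refine majorizes_of_forall_topSum_le (fun x => by positivity) ?_ fun k hk hkN => ?_
  · rw [h_sum, sum_Qvec, Rcoef, if_neg hN.ne', sk_crossGram_eq_one hN]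
    norm_num
  · calc _ ≤ ((1 + sk N (crossGram a b) k) / 2) ^ 2 := topSum_le fun T hT =>
          sum_mul_le_sq_sk a.orthonormal b.orthonormal hψ.le (by simpa using hkN.le) hT
      _ = Rcoef N (crossGram a b) k := by rw [Rcoef, if_neg hk.ne']
      _ ≤ topSum (Qvec N (crossGram a b)) k := Rcoef_le_topSum_Qvec _ (by simpa using hkN.le)
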